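/- If G is a residually finite group, then the core quandle Core(G) (with operation a * b = b a⁻¹ b) is a residually finite quandle. -/

import Mathlib

open Quandles

def ResiduallyFiniteQuandle (Q : Type*) [Quandle Q] : Prop :=
  ∀ x y : Q, x ≠ y →
    ∃ (F : Type) (_ : Quandle F) (_ : Fintype F) (φ : Q →◃ F), φ x ≠ φ y

def ResiduallyFiniteGroup (G : Type*) [Group G] : Prop :=
  ∀ g : G, g ≠ 1 →
    ∃ (F : Type) (_ : Group F) (_ : Fintype F) (φ : G →* F), φ g ≠ 1

/-- The core quandle of a group: the underlying set of `G` with the operation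
`a * b = b a⁻¹ b` (here written with the acting element first). -/
def Core (G : Type*) [Group G] : Type _ := G

instance Core.instGroup (G : Type*) [Group G] : Group (Core G) := ‹Group G›

instance Core.instQuandle (G : Type*) [Group G] : Quandle (Core G) where
  act x y := x * y⁻¹ * x
  self_distrib := by
    intro x y z
    group
  invAct x y := x * y⁻¹ * x
  left_inv x y := by
    show x * (x * y⁻¹ * x)⁻¹ * x = y
    group
  right_inv x y := by
    show x * (x * y⁻¹ * x)⁻¹ * x = y
    group
  fix := by
    intro x
    show x * x⁻¹ * x = x
    group

def Core.map {G H : Type*} [Group G] [Group H] (φ : G →* H) : Core G →◃ Core H where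
  toFun := φ
  map_act' := show ∀ {x y : G}, φ (x * y⁻¹ * x) = φ x * (φ y)⁻¹ * φ x by simp

theorem ResiduallyFiniteGroup.exists_hom_ne {G : Type*} [Group G]
    (hG : ResiduallyFiniteGroup G) {x y : G} (hxy : x ≠ y) :
    ∃ (F : Type) (_ : Group F) (_ : Fintype F) (φ : G →* F), φ x ≠ φ y := by
  obtain ⟨F, instGroup, instFintype, φ, hφ⟩ := hG (x * y⁻¹) (mul_inv_eq_one.not.mpr hxy)
  refine ⟨F, instGroup, instFintype, φ, fun h => hφ ?_⟩
  rw [map_mul, map_inv, h, mul_inv_cancel]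

/-- The core quandle of a residually finite group is a residually finite
quandle. -/
theorem core_residually_finite (G : Type*) [Group G]
    (hG : ResiduallyFiniteGroup G) :
    ResiduallyFiniteQuandle (Core G) := by
  intro x y hxy
  obtain ⟨F, _, instFintype, φ, hφ⟩ := hG.exists_hom_ne hxy
  exact ⟨Core F, inferInstance, instFintype, Core.map φ, hφ⟩
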